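/- arXiv:1009.3006 — 8 statements merged into one kernel-verified Lean document; each statement's English description precedes it below -/
import Mathlib

section
/- Let P be a compact convex set in the Euclidean plane ℝ² with nonempty interior, and let q be a point with q ∉ P. Then there exist points b and c in ℝ² such that the triangle with vertices q, b, c circumscribes P (i.e., P is contained in the convex hull of {q,b,c} and each of the three closed segments [q,b], [q,c], [b,c] has nonempty intersection with P) and the midpoint of the segment [b,c] lies in P. Moreover, such a triangle is unique: if both △qbc and △qb'c' circumscribe P with the midpoints of [b,c] and of [b',c'] lying in P, then {b,c} = {b',c'}. -/
/-!
Separate `q` from `P` and take the two extreme rays from `q` meeting `P`; in a basis `e₀, e₁` along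
them with `q + eᵢ ∈ P`, every `p ∈ P` has coordinates `x, y ≥ 0` of `p - q`. The two free vertices
of a circumscribing triangle lie on these rays: `q + eᵢ ∈ P` makes each `eᵢ` a nonnegative
combination of `b - q` and `c - q`, whose coordinates are nonnegative too, and nonnegative
mutually inverse `2 × 2` matrices are (anti)diagonal. For `b = q + β e₀`, `c = q + γ e₁`,
containing `P` means `γ x + β y ≤ β γ` on `P`.

Existence: at the point `m` of `P` maximising `x y`, with coordinates `(x₀, y₀)`, convexity of `P`
gives the first-order condition `y₀ x + x₀ y ≤ 2 x₀ y₀` on `P`, so `β = 2 x₀`, `γ = 2 y₀` works and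
`m` is the midpoint of `[b, c]`. Uniqueness: each midpoint lies in the other triangle, so
`γ β' + β γ' ≤ 2 min (β γ, β' γ')`, which by AM-GM forces `β = β'` and `γ = γ'`.
-/

open EuclideanGeometry Real Set

/-- A triangle with vertices `q`, `b`, `c` circumscribes `P`: `P` is contained in the
convex hull of the vertices and each of the three closed sides meets `P`. -/
def Circumscribes (q b c : EuclideanSpace ℝ (Fin 2)) (P : Set (EuclideanSpace ℝ (Fin 2))) : Prop :=
  P ⊆ convexHull ℝ {q, b, c} ∧
  (segment ℝ q b ∩ P).Nonempty ∧
  (segment ℝ q c ∩ P).Nonempty ∧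
  (segment ℝ b c ∩ P).Nonempty

open Module

local notation "E2" => EuclideanSpace ℝ (Fin 2)

theorem add_le_two_mul_of_forall_mul_le {a b x y : ℝ}
    (h : ∀ t ∈ Icc (0 : ℝ) 1, ((1 - t) * a + t * x) * ((1 - t) * b + t * y) ≤ a * b) :
    b * x + a * y ≤ 2 * (a * b) := by
  by_contra! hlt
  set c := b * x + a * y - 2 * (a * b)
  set d := (x - a) * (y - b)
  have hexpand : ∀ t, ((1 - t) * a + t * x) * ((1 - t) * b + t * y) - a * b = t * c + t ^ 2 * d :=
    fun t => by ring
  have hc : 0 < c := by linarith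
  have hd : c + d ≤ 0 := by linarith [h 1 ⟨zero_le_one, le_rfl⟩, hexpand 1]
  have hcd : 0 < c - d := by linarith
  -- at `t = c / (c - d)` the product exceeds `a * b` by `c ^ 3 / (c - d) ^ 2`
  have hgain : c / (c - d) * c + (c / (c - d)) ^ 2 * d = c ^ 3 / (c - d) ^ 2 := by
    field_simp
    ring
  have ht := h (c / (c - d)) ⟨div_nonneg hc.le hcd.le, (div_le_one hcd).2 (by linarith)⟩
  have : 0 < c ^ 3 / (c - d) ^ 2 := div_pos (pow_pos hc 3) (pow_pos hcd 2)
  linarith [hexpand (c / (c - d))]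

/-- `!![a, b; c, d] * !![s, s'; t, t'] = 1` with all entries nonnegative. -/
theorem diag_or_antidiag_of_nonneg_inverse {a b c d s t s' t' : ℝ}
    (ha : 0 ≤ a) (hb : 0 ≤ b) (hc : 0 ≤ c) (hd : 0 ≤ d)
    (hs : 0 ≤ s) (ht : 0 ≤ t) (hs' : 0 ≤ s') (ht' : 0 ≤ t')
    (h₁ : a * s + b * t = 1) (h₂ : c * s + d * t = 0)
    (h₃ : a * s' + b * t' = 0) (h₄ : c * s' + d * t' = 1) :
    (0 < a ∧ c = 0 ∧ b = 0 ∧ 0 < d) ∨ (a = 0 ∧ 0 < c ∧ 0 < b ∧ d = 0) := by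
  have hcs : c * s = 0 := by nlinarith [mul_nonneg hc hs, mul_nonneg hd ht]
  have hdt : d * t = 0 := by nlinarith [mul_nonneg hc hs, mul_nonneg hd ht]
  have has' : a * s' = 0 := by nlinarith [mul_nonneg ha hs', mul_nonneg hb ht']
  have hbt' : b * t' = 0 := by nlinarith [mul_nonneg ha hs', mul_nonneg hb ht']
  rcases hs.eq_or_lt with rfl | hs
  · have hd0 : d = 0 := (mul_eq_zero.1 hdt).resolve_right (by rintro rfl; linarith)
    subst hd0
    have ha0 : a = 0 := (mul_eq_zero.1 has').resolve_right (by rintro rfl; linarith)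
    exact Or.inr ⟨ha0, by nlinarith, by nlinarith, rfl⟩
  · have hc0 : c = 0 := (mul_eq_zero.1 hcs).resolve_right hs.ne'
    subst hc0
    have hb0 : b = 0 := (mul_eq_zero.1 hbt').resolve_right (by rintro rfl; linarith)
    exact Or.inl ⟨by nlinarith, rfl, hb0, by nlinarith⟩

theorem eq_and_eq_of_add_le_two_mul {β γ β' γ' : ℝ} (hβ : 0 < β) (hγ : 0 < γ) (hβ' : 0 < β')
    (hγ' : 0 < γ') (h : γ * β' + β * γ' ≤ 2 * (β * γ)) (h' : γ * β' + β * γ' ≤ 2 * (β' * γ')) :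
    β = β' ∧ γ = γ' := by
  have hcross : γ * β' = β * γ' := by
    nlinarith [mul_le_mul h h' (by positivity) (by positivity), sq_nonneg (γ * β' - β * γ')]
  obtain rfl : β = β' := le_antisymm (by nlinarith) (by nlinarith)
  exact ⟨rfl, by nlinarith⟩

section Vector

variable {E : Type*} [AddCommGroup E] [Module ℝ E]

theorem mem_convexHull_triple_iff {q b c p : E} :
    p ∈ convexHull ℝ {q, b, c} ↔
      ∃ s t : ℝ, 0 ≤ s ∧ 0 ≤ t ∧ s + t ≤ 1 ∧ p = q + s • (b - q) + t • (c - q) := by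
  constructor
  · refine fun hp => convexHull_min (t := {p | ∃ s t : ℝ, 0 ≤ s ∧ 0 ≤ t ∧ s + t ≤ 1 ∧
      p = q + s • (b - q) + t • (c - q)}) ?_ ?_ hp
    · rintro _ (rfl | rfl | rfl)
      · exact ⟨0, 0, by norm_num⟩
      · exact ⟨1, 0, by norm_num⟩
      · exact ⟨0, 1, by norm_num⟩
    · rintro _ ⟨s, t, hs, ht, hst, rfl⟩ _ ⟨s', t', hs', ht', hst', rfl⟩ μ ν hμ hν hμν
      refine ⟨μ * s + ν * s', μ * t + ν * t', by positivity, by positivity, by nlinarith, ?_⟩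
      obtain rfl : ν = 1 - μ := by linarith
      module
  · rintro ⟨s, t, hs, ht, hst, rfl⟩
    refine mem_convexHull_of_exists_fintype ![1 - s - t, s, t] ![q, b, c] ?_ ?_ ?_ ?_
    · simpa [Fin.forall_fin_succ] using ⟨by linarith, hs, ht⟩
    · simp only [Fin.sum_univ_three, Matrix.cons_val_zero, Matrix.cons_val_one, Matrix.cons_val]
      ring
    · simp [Fin.forall_fin_succ]
    · simp only [Fin.sum_univ_three, Matrix.cons_val_zero, Matrix.cons_val_one, Matrix.cons_val]
      module

theorem add_mem_segment_add_smul (q v : E) {β : ℝ} (hβ : 1 ≤ β) :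
    q + v ∈ segment ℝ q (q + β • v) := by
  rw [segment_eq_image']
  refine ⟨β⁻¹, ⟨by positivity, inv_le_one_of_one_le₀ hβ⟩, ?_⟩
  simp [smul_smul, inv_mul_cancel₀ (by positivity : β ≠ 0)]

theorem midpoint_add_smul_add_smul (q u v : E) (x y : ℝ) :
    midpoint ℝ (q + x • u) (q + y • v) = q + (x / 2) • u + (y / 2) • v := by
  rw [midpoint_eq_smul_add]
  simp only [invOf_eq_inv]
  module

theorem midpoint_eq_of_pair_eq {b c b' c' : E} (h : ({b, c} : Set E) = {b', c'}) :
    midpoint ℝ b c = midpoint ℝ b' c' := by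
  rcases pair_eq_pair_iff.1 h with ⟨rfl, rfl⟩ | ⟨rfl, rfl⟩
  · rfl
  · exact midpoint_comm _ _

theorem eq_smul_add_smul_iff_repr (e : Basis (Fin 2) ℝ E) (w : E) (x y : ℝ) :
    w = x • e 0 + y • e 1 ↔ e.repr w 0 = x ∧ e.repr w 1 = y := by
  constructor
  · rintro rfl
    simp
  · rintro ⟨hx, hy⟩
    rw [← e.sum_repr w, Fin.sum_univ_two, hx, hy]

theorem eq_add_repr_sub_smul (e : Basis (Fin 2) ℝ E) (q w : E) :
    w = q + e.repr (w - q) 0 • e 0 + e.repr (w - q) 1 • e 1 := by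
  rw [add_assoc, ← (eq_smul_add_smul_iff_repr e _ _ _).2 ⟨rfl, rfl⟩, add_sub_cancel]

end Vector

section Normed

variable {E : Type*} [NormedAddCommGroup E] [NormedSpace ℝ E]

theorem eq_zero_of_forall_mem_eq_of_nonempty_interior {P : Set E} (hP : (interior P).Nonempty)
    (k : E →L[ℝ] ℝ) {r : ℝ} (hk : ∀ p ∈ P, k p = r) : k = 0 := by
  by_contra hk0
  have hopen : IsOpen (k '' interior P) := k.isOpenMap_of_ne_zero hk0 _ isOpen_interior
  have hr : k '' interior P = {r} :=
    (hP.image k).subset_singleton_iff.1 <| image_subset_iff.2 fun p hp => hk p (interior_subset hp)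
  exact not_isOpen_singleton r (hr ▸ hopen)

theorem exists_ne_smul_of_one_lt_finrank [FiniteDimensional ℝ E] (hE : 1 < finrank ℝ E)
    (f : E →L[ℝ] ℝ) : ∃ h : E →L[ℝ] ℝ, ∀ m : ℝ, h ≠ m • f := by
  obtain ⟨w, hw, hw0⟩ := Submodule.exists_mem_ne_zero_of_ne_bot <|
    LinearMap.ker_ne_bot_of_finrank_lt (f := (f : E →ₗ[ℝ] ℝ)) (by rwa [finrank_self])
  obtain ⟨h, hh⟩ := SeparatingDual.exists_ne_zero (R := ℝ) hw0
  refine ⟨h, fun m hm => hh ?_⟩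
  simpa [hm] using Or.inr hw

theorem exists_tangent_functionals [FiniteDimensional ℝ E] (hE : 1 < finrank ℝ E) {P : Set E}
    (hPc : IsCompact P) (hPconv : Convex ℝ P) (hPint : (interior P).Nonempty) {q : E}
    (hq : q ∉ P) :
    ∃ (u v : E) (σ τ : E →L[ℝ] ℝ), q + u ∈ P ∧ q + v ∈ P ∧ 0 < σ u ∧ σ v = 0 ∧ τ u = 0 ∧
      0 < τ v ∧ ∀ p ∈ P, 0 ≤ σ (p - q) ∧ 0 ≤ τ (p - q) := by
  have hPne : P.Nonempty := hPint.mono interior_subset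
  obtain ⟨f, r, hfq, hfP⟩ := geometric_hahn_banach_point_closed hPconv hPc.isClosed hq
  have hf : ∀ p ∈ P, 0 < f (p - q) := fun p hp => by
    rw [map_sub]; linarith [hfP p hp]
  obtain ⟨h, hh⟩ := exists_ne_smul_of_one_lt_finrank hE f
  -- the rays from `q` through `P` are swept between the extreme values of the slope `h / f`
  set g : E → ℝ := fun p => h (p - q) / f (p - q)
  have hg : ContinuousOn g P :=
    (by fun_prop : Continuous fun p => h (p - q)).continuousOn.div
      (by fun_prop : Continuous fun p => f (p - q)).continuousOn fun p hp => (hf p hp).ne'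
  obtain ⟨p₁, hp₁, hmin⟩ := hPc.exists_isMinOn hPne hg
  obtain ⟨p₂, hp₂, hmax⟩ := hPc.exists_isMaxOn hPne hg
  have hslope : ∀ p ∈ P, h (p - q) = g p * f (p - q) := fun p hp =>
    (div_mul_cancel₀ _ (hf p hp).ne').symm
  have hlt : g p₁ < g p₂ := by
    by_contra! hle
    have hconst : ∀ p ∈ P, (h - g p₁ • f) p = (h - g p₁ • f) q := fun p hp => by
      have hgp : g p = g p₁ := le_antisymm ((hmax hp).trans hle) (hmin hp)
      have := hslope p hp
      simp only [sub_apply, smul_apply, smul_eq_mul, map_sub, hgp] at this ⊢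
      linarith
    exact hh (g p₁) (sub_eq_zero.1 (eq_zero_of_forall_mem_eq_of_nonempty_interior hPint _ hconst))
  refine ⟨p₁ - q, p₂ - q, g p₂ • f - h, h - g p₁ • f, by simpa, by simpa, ?_, ?_, ?_, ?_, ?_⟩
  all_goals simp only [sub_apply, smul_apply, smul_eq_mul]
  · rw [hslope p₁ hp₁]; nlinarith [hf p₁ hp₁]
  · rw [hslope p₂ hp₂]; ring
  · rw [hslope p₁ hp₁]; ring
  · rw [hslope p₂ hp₂]; nlinarith [hf p₂ hp₂]
  · intro p hp
    rw [hslope p hp]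
    exact ⟨by nlinarith [mul_nonneg (sub_nonneg.2 (hmax hp)) (hf p hp).le],
      by nlinarith [mul_nonneg (sub_nonneg.2 (hmin hp)) (hf p hp).le]⟩

theorem exists_basis_of_dual_pair [FiniteDimensional ℝ E] (hE : finrank ℝ E = 2) {u v : E}
    {σ τ : E →ₗ[ℝ] ℝ} (hσu : σ u ≠ 0) (hσv : σ v = 0) (hτu : τ u = 0) (hτv : τ v ≠ 0) :
    ∃ e : Basis (Fin 2) ℝ E, e 0 = u ∧ e 1 = v ∧
      ∀ x, e.repr x 0 = σ x / σ u ∧ e.repr x 1 = τ x / τ v := by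
  have hli : LinearIndependent ℝ ![u, v] := by
    refine LinearIndependent.pair_iff.2 fun s t hst => ?_
    have hσ := congrArg σ hst
    have hτ := congrArg τ hst
    simp only [map_add, map_smul, smul_eq_mul, hσv, hτu, map_zero] at hσ hτ
    exact ⟨by simpa [hσu] using hσ, by simpa [hτv] using hτ⟩
  set e := basisOfLinearIndependentOfCardEqFinrank hli (by simp [hE])
  have he₀ : e 0 = u := by simp [e]
  have he₁ : e 1 = v := by simp [e]
  refine ⟨e, he₀, he₁, fun x => ?_⟩
  have hx : e.repr x 0 • u + e.repr x 1 • v = x := by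
    rw [← he₀, ← he₁, ← Fin.sum_univ_two (fun i => e.repr x i • e i), e.sum_repr]
  have hσx := congrArg σ hx
  have hτx := congrArg τ hx
  simp only [map_add, map_smul, smul_eq_mul, hσv, hτu, mul_zero, zero_add, add_zero] at hσx hτx
  exact ⟨eq_div_of_mul_eq hσu hσx, eq_div_of_mul_eq hτv hτx⟩

theorem exists_basis_tangent_cone [FiniteDimensional ℝ E] (hE : finrank ℝ E = 2) {P : Set E}
    (hPc : IsCompact P) (hPconv : Convex ℝ P) (hPint : (interior P).Nonempty) {q : E}
    (hq : q ∉ P) :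
    ∃ e : Basis (Fin 2) ℝ E, (∀ i, q + e i ∈ P) ∧ ∀ p ∈ P, ∀ i, 0 ≤ e.repr (p - q) i := by
  obtain ⟨u, v, σ, τ, hu, hv, hσu, hσv, hτu, hτv, hP⟩ :=
    exists_tangent_functionals (by omega) hPc hPconv hPint hq
  obtain ⟨e, he₀, he₁, hrepr⟩ :=
    exists_basis_of_dual_pair hE (σ := σ) (τ := τ) hσu.ne' hσv hτu hτv.ne'
  refine ⟨e, Fin.forall_fin_two.2 ⟨he₀ ▸ hu, he₁ ▸ hv⟩, fun p hp => Fin.forall_fin_two.2 ?_⟩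
  rw [(hrepr _).1, (hrepr _).2]
  exact ⟨div_nonneg (hP p hp).1 hσu.le, div_nonneg (hP p hp).2 hτv.le⟩

end Normed

section Basis

variable {E : Type*} [AddCommGroup E] [Module ℝ E] (e : Basis (Fin 2) ℝ E) {P : Set E} {q : E}

theorem mem_convexHull_basis_triangle_iff {β γ : ℝ} (hβ : 0 < β) (hγ : 0 < γ) {p : E} :
    p ∈ convexHull ℝ {q, q + β • e 0, q + γ • e 1} ↔
      0 ≤ e.repr (p - q) 0 ∧ 0 ≤ e.repr (p - q) 1 ∧
        γ * e.repr (p - q) 0 + β * e.repr (p - q) 1 ≤ β * γ := by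
  rw [mem_convexHull_triple_iff]
  simp only [add_sub_cancel_left, smul_smul]
  constructor
  · rintro ⟨s, t, hs, ht, hst, rfl⟩
    have hpq : q + (s * β) • e 0 + (t * γ) • e 1 - q = (s * β) • e 0 + (t * γ) • e 1 := by
      abel
    obtain ⟨hx, hy⟩ := (eq_smul_add_smul_iff_repr e _ _ _).1 hpq
    rw [hx, hy]
    exact ⟨by positivity, by positivity, by nlinarith [mul_pos hβ hγ]⟩
  · rintro ⟨hx, hy, hxy⟩
    refine ⟨e.repr (p - q) 0 / β, e.repr (p - q) 1 / γ, by positivity, by positivity, ?_, ?_⟩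
    · rw [div_add_div _ _ hβ.ne' hγ.ne', div_le_one (by positivity)]
      linarith
    · rw [div_mul_cancel₀ _ hβ.ne', div_mul_cancel₀ _ hγ.ne']
      exact eq_add_repr_sub_smul e q p

theorem add_le_two_mul_of_isMaxOn (hPconv : Convex ℝ P) {m : E} (hm : m ∈ P)
    (hmax : IsMaxOn (fun p => e.repr (p - q) 0 * e.repr (p - q) 1) P m) {p : E} (hp : p ∈ P) :
    e.repr (m - q) 1 * e.repr (p - q) 0 + e.repr (m - q) 0 * e.repr (p - q) 1 ≤
      2 * (e.repr (m - q) 0 * e.repr (m - q) 1) := by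
  refine add_le_two_mul_of_forall_mul_le fun t ht => ?_
  have hseg : (1 - t) • m + t • p ∈ P := hPconv hm hp (by linarith [ht.2]) ht.1 (by ring)
  have hcoord : (1 - t) • m + t • p - q = (1 - t) • (m - q) + t • (p - q) := by module
  simpa only [mem_ofPred_eq, hcoord, map_add, map_smul, Finsupp.add_apply, Finsupp.smul_apply,
    smul_eq_mul] using hmax hseg

theorem repr_sub_nonneg_of_segment_inter_nonempty (hq : q ∉ P)
    (hP : ∀ p ∈ P, ∀ i, 0 ≤ e.repr (p - q) i) {b : E} (hb : (segment ℝ q b ∩ P).Nonempty)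
    (i : Fin 2) : 0 ≤ e.repr (b - q) i := by
  obtain ⟨w, hw, hwP⟩ := hb
  rw [segment_eq_image'] at hw
  obtain ⟨θ, ⟨hθ, -⟩, rfl⟩ := hw
  have hθ : 0 < θ := hθ.lt_of_ne <| by rintro rfl; simp [hq] at hwP
  simpa [mul_nonneg_iff_of_pos_left hθ] using hP _ hwP i

theorem exists_pair_eq_tangent_rays (hq : q ∉ P) (he : ∀ i, q + e i ∈ P)
    (hP : ∀ p ∈ P, ∀ i, 0 ≤ e.repr (p - q) i) {b c : E} (hsub : P ⊆ convexHull ℝ {q, b, c})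
    (hb : (segment ℝ q b ∩ P).Nonempty) (hc : (segment ℝ q c ∩ P).Nonempty) :
    ∃ β γ : ℝ, 0 < β ∧ 0 < γ ∧ ({b, c} : Set E) = {q + β • e 0, q + γ • e 1} := by
  have hcone : ∀ i, ∃ s t : ℝ, 0 ≤ s ∧ 0 ≤ t ∧ e i = s • (b - q) + t • (c - q) := fun i => by
    obtain ⟨s, t, hs, ht, -, h⟩ := mem_convexHull_triple_iff.1 (hsub (he i))
    exact ⟨s, t, hs, ht, add_left_cancel (h.trans (add_assoc _ _ _))⟩
  obtain ⟨s, t, hs, ht, h₀⟩ := hcone 0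
  obtain ⟨s', t', hs', ht', h₁⟩ := hcone 1
  have hb := repr_sub_nonneg_of_segment_inter_nonempty e hq hP hb
  have hc := repr_sub_nonneg_of_segment_inter_nonempty e hq hP hc
  have hcoord : ∀ (i j : Fin 2) {μ ν : ℝ}, e i = μ • (b - q) + ν • (c - q) →
      e.repr (b - q) j * μ + e.repr (c - q) j * ν = if i = j then 1 else 0 := by
    intro i j μ ν h
    have := congrArg (fun w => e.repr w j) h
    simp only [e.repr_self, map_add, map_smul, Finsupp.add_apply, Finsupp.smul_apply,
      Finsupp.single_apply, smul_eq_mul] at this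
    rw [this]
    ring
  rcases diag_or_antidiag_of_nonneg_inverse (hb 0) (hc 0) (hb 1) (hc 1) hs ht hs' ht'
    (hcoord 0 0 h₀) (hcoord 0 1 h₀) (hcoord 1 0 h₁) (hcoord 1 1 h₁) with
    ⟨hxb, hyb, hxc, hyc⟩ | ⟨hxb, hyb, hxc, hyc⟩
  · refine ⟨_, _, hxb, hyc, ?_⟩
    rw [eq_add_repr_sub_smul e q b, eq_add_repr_sub_smul e q c, hyb, hxc]
    simp
  · refine ⟨_, _, hxc, hyb, ?_⟩
    rw [eq_add_repr_sub_smul e q b, eq_add_repr_sub_smul e q c, hxb, hyc, pair_comm]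
    simp

theorem eq_and_eq_of_midpoint_mem {β γ β' γ' : ℝ} (hβ : 0 < β) (hγ : 0 < γ) (hβ' : 0 < β')
    (hγ' : 0 < γ') (hsub : P ⊆ convexHull ℝ {q, q + β • e 0, q + γ • e 1})
    (hsub' : P ⊆ convexHull ℝ {q, q + β' • e 0, q + γ' • e 1})
    (hm : midpoint ℝ (q + β • e 0) (q + γ • e 1) ∈ P)
    (hm' : midpoint ℝ (q + β' • e 0) (q + γ' • e 1) ∈ P) : β = β' ∧ γ = γ' := by
  have hcoord (x y : ℝ) := (eq_smul_add_smul_iff_repr e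
    (midpoint ℝ (q + x • e 0) (q + y • e 1) - q) (x / 2) (y / 2)).1
    (by rw [midpoint_add_smul_add_smul]; abel)
  have h := ((mem_convexHull_basis_triangle_iff e hβ hγ).1 (hsub hm')).2.2
  have h' := ((mem_convexHull_basis_triangle_iff e hβ' hγ').1 (hsub' hm)).2.2
  rw [(hcoord β' γ').1, (hcoord β' γ').2] at h
  rw [(hcoord β γ).1, (hcoord β γ).2] at h'
  exact eq_and_eq_of_add_le_two_mul hβ hγ hβ' hγ' (by linarith) (by linarith)

end Basis

section Plane

variable (e : Basis (Fin 2) ℝ E2) {P : Set E2} {q : E2}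

theorem exists_circumscribes_midpoint_mem (hPc : IsCompact P) (hPconv : Convex ℝ P)
    (he : ∀ i, q + e i ∈ P) (hP : ∀ p ∈ P, ∀ i, 0 ≤ e.repr (p - q) i) :
    ∃ b c, Circumscribes q b c P ∧ midpoint ℝ b c ∈ P := by
  have hcont : ContinuousOn (fun p => e.repr (p - q) 0 * e.repr (p - q) 1) P := by
    have := (e.coord 0).continuous_of_finiteDimensional
    have := (e.coord 1).continuous_of_finiteDimensional
    simp only [← e.coord_apply]
    fun_prop
  obtain ⟨m, hm, hmax⟩ := hPc.exists_isMaxOn ⟨_, he 0⟩ hcont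
  have hcenter : q + (1 / 2 : ℝ) • e 0 + (1 / 2 : ℝ) • e 1 ∈ P := by
    convert hPconv (he 0) (he 1) (by norm_num : (0 : ℝ) ≤ 1 / 2) (by norm_num : (0 : ℝ) ≤ 1 / 2)
      (by norm_num) using 1
    module
  have hcenter_repr := (eq_smul_add_smul_iff_repr e
    (q + (1 / 2 : ℝ) • e 0 + (1 / 2 : ℝ) • e 1 - q) _ _).1 (by abel)
  have hquarter : (1 / 2 : ℝ) * (1 / 2) ≤ e.repr (m - q) 0 * e.repr (m - q) 1 := by
    simpa only [mem_ofPred_eq, hcenter_repr.1, hcenter_repr.2] using hmax hcenter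
  have hsupp := fun p (hp : p ∈ P) => add_le_two_mul_of_isMaxOn e hPconv hm hmax hp
  set x₀ := e.repr (m - q) 0
  set y₀ := e.repr (m - q) 1
  have hx₀ : 0 < x₀ := by by_contra! h; nlinarith [hP m hm 0, hP m hm 1]
  have hy₀ : 0 < y₀ := by by_contra! h; nlinarith [hP m hm 0, hP m hm 1]
  have h2x₀ : 1 ≤ 2 * x₀ := by
    have := hsupp _ (he 0)
    simp only [add_sub_cancel_left, e.repr_self, Finsupp.single_eq_same,
      Finsupp.single_eq_of_ne one_ne_zero, mul_one, mul_zero, add_zero] at this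
    nlinarith
  have h2y₀ : 1 ≤ 2 * y₀ := by
    have := hsupp _ (he 1)
    simp only [add_sub_cancel_left, e.repr_self, Finsupp.single_eq_same,
      Finsupp.single_eq_of_ne zero_ne_one, mul_one, mul_zero, zero_add] at this
    nlinarith
  have hmid : midpoint ℝ (q + (2 * x₀) • e 0) (q + (2 * y₀) • e 1) = m := by
    conv_rhs => rw [eq_add_repr_sub_smul e q m]
    rw [midpoint_add_smul_add_smul]
    module
  refine ⟨_, _, ⟨fun p hp => ?_, ⟨q + e 0, add_mem_segment_add_smul _ _ h2x₀, he 0⟩,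
    ⟨q + e 1, add_mem_segment_add_smul _ _ h2y₀, he 1⟩, ⟨m, hmid ▸ midpoint_mem_segment _ _, hm⟩⟩,
    hmid ▸ hm⟩
  rw [mem_convexHull_basis_triangle_iff e (by linarith) (by linarith)]
  exact ⟨hP p hp 0, hP p hp 1, by nlinarith [hsupp p hp]⟩

theorem pair_eq_of_circumscribes (hq : q ∉ P) (he : ∀ i, q + e i ∈ P)
    (hP : ∀ p ∈ P, ∀ i, 0 ≤ e.repr (p - q) i) {b c b' c' : E2} (hC : Circumscribes q b c P)
    (hm : midpoint ℝ b c ∈ P) (hC' : Circumscribes q b' c' P) (hm' : midpoint ℝ b' c' ∈ P) :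
    ({b, c} : Set E2) = {b', c'} := by
  obtain ⟨β, γ, hβ, hγ, hbc⟩ := exists_pair_eq_tangent_rays e hq he hP hC.1 hC.2.1 hC.2.2.1
  obtain ⟨β', γ', hβ', hγ', hbc'⟩ := exists_pair_eq_tangent_rays e hq he hP hC'.1 hC'.2.1 hC'.2.2.1
  have hsub : P ⊆ convexHull ℝ {q, q + β • e 0, q + γ • e 1} := hbc ▸ hC.1
  have hsub' : P ⊆ convexHull ℝ {q, q + β' • e 0, q + γ' • e 1} := hbc' ▸ hC'.1
  obtain ⟨rfl, rfl⟩ := eq_and_eq_of_midpoint_mem e hβ hγ hβ' hγ' hsub hsub'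
    (midpoint_eq_of_pair_eq hbc ▸ hm) (midpoint_eq_of_pair_eq hbc' ▸ hm')
  rw [hbc, hbc']

end Plane

theorem exists_unique_circumscribing_triangle_with_midpoint
    (P : Set (EuclideanSpace ℝ (Fin 2)))
    (hPc : IsCompact P) (hPconv : Convex ℝ P) (hPint : (interior P).Nonempty)
    (q : EuclideanSpace ℝ (Fin 2)) (hq : q ∉ P) :
    (∃ b c : EuclideanSpace ℝ (Fin 2),
        Circumscribes q b c P ∧ midpoint ℝ b c ∈ P) ∧
    (∀ b c b' c' : EuclideanSpace ℝ (Fin 2),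
        Circumscribes q b c P → midpoint ℝ b c ∈ P →
        Circumscribes q b' c' P → midpoint ℝ b' c' ∈ P →
        ({b, c} : Set (EuclideanSpace ℝ (Fin 2))) = {b', c'}) := by
  obtain ⟨e, he, hcone⟩ := exists_basis_tangent_cone (by simp) hPc hPconv hPint hq
  exact ⟨exists_circumscribes_midpoint_mem e hPc hPconv he hcone,
    fun b c b' c' => pair_eq_of_circumscribes e hq he hcone⟩
end

section
/- Let P be a compact convex set in the Euclidean plane ℝ² with nonempty interior, and let q ∉ P. Among all triangles with vertex q that circumscribe P, the triangle △qbc such that the midpoint of the side [b,c] lies in P is the unique one of minimum area: if △qb'c' circumscribes P and the midpoint of [b',c'] does not lie in P, then the area (two-dimensional Lebesgue measure of the convex hull) of △qbc is strictly smaller than that of △qb'c'. -/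
/-!
Each triangle contains `P` and touches it on both sides through `q`, while `q ∉ P`, so each
triangle's angle at `q` contains the other's two sides: the two angles coincide, and after
possibly swapping `b'` and `c'` we get `b - q = a • (b' - q)` and `c - q = d • (c' - q)`. In the
frame `(q; b' - q, c' - q)` the midpoint of `[b, c]` has coordinates `(a / 2, d / 2)`, so it lies in
`△qb'c'` only if `a + d ≤ 2`, and then `a * d < 1` by AM-GM unless `a = d = 1`, i.e. unless the
triangles coincide. The area ratio of the two triangles is `a * d`.
-/

open EuclideanGeometry Real Set MeasureTheory

open scoped Pointwise

section Cone

variable {E : Type*} [AddCommGroup E] [Module ℝ E]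

lemma PointedCone.mem_hull_pair_iff {u v w : E} :
    w ∈ PointedCone.hull ℝ {u, v} ↔ ∃ s t : ℝ, 0 ≤ s ∧ 0 ≤ t ∧ s • u + t • v = w := by
  rw [PointedCone.hull, Submodule.mem_span_pair]
  constructor
  · rintro ⟨s, t, rfl⟩
    exact ⟨s, t, s.2, t.2, rfl⟩
  · rintro ⟨s, t, hs, ht, rfl⟩
    exact ⟨⟨s, hs⟩, ⟨t, ht⟩, rfl⟩

lemma exists_sub_eq_smul_add_smul_of_mem_convexHull_triple {q b c p : E}
    (h : p ∈ convexHull ℝ ({q, b, c} : Set E)) :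
    ∃ s t : ℝ, 0 ≤ s ∧ 0 ≤ t ∧ s + t ≤ 1 ∧ p - q = s • (b - q) + t • (c - q) := by
  rw [convexHull_insert (insert_nonempty b {c}), convexHull_pair, mem_convexJoin] at h
  obtain ⟨_, rfl, z, ⟨u₁, u₂, hu₁, hu₂, hu, rfl⟩, ⟨v₁, v₂, hv₁, hv₂, hv, rfl⟩⟩ := h
  refine ⟨v₂ * u₁, v₂ * u₂, by positivity, by positivity, by nlinarith, ?_⟩
  rw [eq_sub_of_add_eq hu, eq_sub_of_add_eq hv]
  module

lemma sub_mem_hull_pair_of_segment_inter_nonempty {P : Set E} {q b c r : E} (hq : q ∉ P)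
    (hP : P ⊆ convexHull ℝ {q, b, c}) (hr : (segment ℝ q r ∩ P).Nonempty) :
    r - q ∈ PointedCone.hull ℝ {b - q, c - q} := by
  obtain ⟨_, hx, hxP⟩ := hr
  rw [segment_eq_image'] at hx
  obtain ⟨α, ⟨hα, -⟩, rfl⟩ := hx
  have hα : 0 < α := hα.lt_of_ne <| by rintro rfl; exact hq (by simpa using hxP)
  obtain ⟨s, t, hs, ht, -, hst⟩ := exists_sub_eq_smul_add_smul_of_mem_convexHull_triple (hP hxP)
  rw [add_sub_cancel_left] at hst
  refine PointedCone.mem_hull_pair_iff.2 ⟨α⁻¹ * s, α⁻¹ * t, by positivity, by positivity, ?_⟩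
  rw [mul_smul, mul_smul, ← smul_add, ← hst, inv_smul_smul₀ hα.ne']

lemma hull_pair_sub_le_of_segment_inter_nonempty {P : Set E} {q b c b' c' : E} (hq : q ∉ P)
    (hP : P ⊆ convexHull ℝ {q, b, c}) (hb' : (segment ℝ q b' ∩ P).Nonempty)
    (hc' : (segment ℝ q c' ∩ P).Nonempty) :
    PointedCone.hull ℝ {b' - q, c' - q} ≤ PointedCone.hull ℝ {b - q, c - q} :=
  Submodule.span_le.2 <| insert_subset_iff.2
    ⟨sub_mem_hull_pair_of_segment_inter_nonempty hq hP hb',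
      singleton_subset_iff.2 <| sub_mem_hull_pair_of_segment_inter_nonempty hq hP hc'⟩

lemma eq_smul_or_eq_smul_swap_of_hull_pair_eq {u v u' v' : E} (hli : LinearIndependent ℝ ![u, v])
    (h : PointedCone.hull ℝ {u, v} = PointedCone.hull ℝ {u', v'}) :
    (∃ a d : ℝ, u = a • u' ∧ v = d • v') ∨ (∃ a d : ℝ, u = a • v' ∧ v = d • u') := by
  have hu'_mem : u' ∈ PointedCone.hull ℝ {u, v} := h ▸ PointedCone.subset_hull (by simp)
  have hv'_mem : v' ∈ PointedCone.hull ℝ {u, v} := h ▸ PointedCone.subset_hull (by simp)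
  have hu_mem : u ∈ PointedCone.hull ℝ {u', v'} := h ▸ PointedCone.subset_hull (by simp)
  have hv_mem : v ∈ PointedCone.hull ℝ {u', v'} := h ▸ PointedCone.subset_hull (by simp)
  obtain ⟨p₁, p₂, hp₁, hp₂, hu'⟩ := PointedCone.mem_hull_pair_iff.1 hu'_mem
  obtain ⟨r₁, r₂, hr₁, hr₂, hv'⟩ := PointedCone.mem_hull_pair_iff.1 hv'_mem
  obtain ⟨l₁, l₂, hl₁, hl₂, hu⟩ := PointedCone.mem_hull_pair_iff.1 hu_mem
  obtain ⟨m₁, m₂, hm₁, hm₂, hv⟩ := PointedCone.mem_hull_pair_iff.1 hv_mem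
  -- the coefficient matrices are mutually inverse and nonnegative, hence monomial
  obtain ⟨h₁, h₂⟩ := hli.eq_of_pair
      (s := l₁ * p₁ + l₂ * r₁) (t := l₁ * p₂ + l₂ * r₂) (s' := 1) (t' := 0) <| by
    rw [← hu', ← hv'] at hu
    linear_combination (norm := module) hu
  obtain ⟨h₃, h₄⟩ := hli.eq_of_pair
      (s := m₁ * p₁ + m₂ * r₁) (t := m₁ * p₂ + m₂ * r₂) (s' := 0) (t' := 1) <| by
    rw [← hu', ← hv'] at hv
    linear_combination (norm := module) hv
  have hmonomial : (l₂ = 0 ∧ m₁ = 0) ∨ (l₁ = 0 ∧ m₂ = 0) := by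
    have hl₁p₂ : l₁ * p₂ = 0 := by nlinarith [mul_nonneg hl₁ hp₂, mul_nonneg hl₂ hr₂]
    have hl₂r₂ : l₂ * r₂ = 0 := by nlinarith [mul_nonneg hl₁ hp₂, mul_nonneg hl₂ hr₂]
    have hm₁p₁ : m₁ * p₁ = 0 := by nlinarith [mul_nonneg hm₁ hp₁, mul_nonneg hm₂ hr₁]
    have hm₂r₁ : m₂ * r₁ = 0 := by nlinarith [mul_nonneg hm₁ hp₁, mul_nonneg hm₂ hr₁]
    by_cases hl₁0 : l₁ = 0
    · have hr₁0 : r₁ ≠ 0 := by rintro rfl; simp [hl₁0] at h₁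
      exact .inr ⟨hl₁0, (mul_eq_zero.1 hm₂r₁).resolve_right hr₁0⟩
    · have hp₂0 : p₂ = 0 := (mul_eq_zero.1 hl₁p₂).resolve_left hl₁0
      have hr₂0 : r₂ ≠ 0 := by rintro rfl; simp [hp₂0] at h₄
      have hl₂0 : l₂ = 0 := (mul_eq_zero.1 hl₂r₂).resolve_right hr₂0
      have hp₁0 : p₁ ≠ 0 := by rintro rfl; simp [hl₂0] at h₁
      exact .inl ⟨hl₂0, (mul_eq_zero.1 hm₁p₁).resolve_right hp₁0⟩
  rcases hmonomial with ⟨hl₂, hm₁⟩ | ⟨hl₁, hm₂⟩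
  · exact .inl ⟨l₁, m₂, by simpa [hl₂] using hu.symm, by simpa [hm₁] using hv.symm⟩
  · exact .inr ⟨l₂, m₁, by simpa [hl₁] using hu.symm, by simpa [hm₂] using hv.symm⟩

end Cone

lemma mul_lt_one_of_add_le_two {a d : ℝ} (h₀ : 0 ≤ a + d) (h₂ : a + d ≤ 2) (hne : a ≠ 1 ∨ d ≠ 1) :
    a * d < 1 := by
  by_contra! h
  have had : a = d := by nlinarith [sq_nonneg (a - d)]
  subst had
  have : a = 1 := by nlinarith
  tauto

section Plane

variable {E : Type*} [NormedAddCommGroup E] [NormedSpace ℝ E]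

lemma linearIndependent_sub_of_interior_convexHull_nonempty (hE : Module.finrank ℝ E = 2)
    {q b c : E} (h : (interior (convexHull ℝ ({q, b, c} : Set E))).Nonempty) :
    LinearIndependent ℝ ![b - q, c - q] := by
  have hspan : vectorSpan ℝ ({q, b, c} : Set E) = ⊤ :=
    AffineSubspace.vectorSpan_eq_top_of_affineSpan_eq_top ℝ _ _
      (affineSpan_eq_top_of_nonempty_interior h)
  rw [vectorSpan_eq_span_vsub_set_right ℝ (mem_insert q _)] at hspan
  refine linearIndependent_of_top_le_span_of_card_eq_finrank (hspan.symm.trans ?_).le (by simp [hE])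
  simp [image_insert_eq, Submodule.span_insert_zero, pair_comm]

variable [MeasurableSpace E] [BorelSpace E] [FiniteDimensional ℝ E] (μ : Measure E)
  [μ.IsAddHaarMeasure]

lemma addHaar_convexHull_triple_of_sub_eq_smul (hE : Module.finrank ℝ E = 2) {q b c b' c' : E}
    (hli : LinearIndependent ℝ ![b' - q, c' - q]) {a d : ℝ} (hb : b - q = a • (b' - q))
    (hc : c - q = d • (c' - q)) :
    μ (convexHull ℝ {q, b, c}) = ENNReal.ofReal |a * d| * μ (convexHull ℝ {q, b', c'}) := by
  let B : Module.Basis (Fin 2) ℝ E :=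
    basisOfLinearIndependentOfCardEqFinrank hli (by simp [hE])
  have hB : ⇑B = ![b' - q, c' - q] := coe_basisOfLinearIndependentOfCardEqFinrank hli _
  let L := Matrix.toLin B B (Matrix.diagonal ![a, d])
  have hLb : L (b' - q) = b - q := by
    simpa [L, hB, hb] using Matrix.toLin_self B B (Matrix.diagonal ![a, d]) 0
  have hLc : L (c' - q) = c - q := by
    simpa [L, hB, hc] using Matrix.toLin_self B B (Matrix.diagonal ![a, d]) 1
  have hdet : LinearMap.det L = a * d := by
    simp [L, LinearMap.det_toLin, Matrix.det_diagonal]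
  have himage : ({q, b, c} : Set E) = q +ᵥ L '' (-q +ᵥ {q, b', c'}) := by
    simp [vadd_set_insert, image_insert_eq, neg_add_eq_sub, hLb, hLc]
  rw [himage, convexHull_vadd, ← L.image_convexHull, convexHull_vadd, measure_vadd,
    Measure.addHaar_image_linearMap, measure_vadd, hdet]

lemma addHaar_convexHull_lt_of_sub_eq_smul (hE : Module.finrank ℝ E = 2) {P : Set E}
    (hP : (interior P).Nonempty) {q b c b' c' : E} (hsub' : P ⊆ convexHull ℝ {q, b', c'})
    {a d : ℝ} (hb : b - q = a • (b' - q)) (hc : c - q = d • (c' - q))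
    (hmid : midpoint ℝ b c ∈ P) (hmid' : midpoint ℝ b' c' ∉ P) :
    μ (convexHull ℝ {q, b, c}) < μ (convexHull ℝ {q, b', c'}) := by
  have hli' :=
    linearIndependent_sub_of_interior_convexHull_nonempty hE (hP.mono (interior_mono hsub'))
  obtain ⟨s, t, hs, ht, hst, hm⟩ :=
    exists_sub_eq_smul_add_smul_of_mem_convexHull_triple (hsub' hmid)
  have hm' : midpoint ℝ b c - q = (a / 2) • (b' - q) + (d / 2) • (c' - q) := by
    rw [midpoint_eq_smul_add, invOf_eq_inv]
    linear_combination (norm := module) (2⁻¹ : ℝ) • hb + (2⁻¹ : ℝ) • hc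
  obtain ⟨rfl, rfl⟩ := hli'.eq_of_pair (hm.symm.trans hm')
  have hne : a ≠ 1 ∨ d ≠ 1 := by
    by_contra! h
    obtain ⟨rfl, rfl⟩ := h
    rw [one_smul, sub_left_inj] at hb hc
    exact hmid' (hb ▸ hc ▸ hmid)
  have had : |a * d| < 1 := by
    rw [abs_of_nonneg (by nlinarith)]
    exact mul_lt_one_of_add_le_two (by linarith) (by linarith) hne
  have hpos : 0 < μ (convexHull ℝ {q, b', c'}) :=
    (isOpen_interior.measure_pos μ hP).trans_le (measure_mono (interior_subset.trans hsub'))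
  have hfin : μ (convexHull ℝ {q, b', c'}) ≠ ⊤ :=
    ((toFinite _).isCompact_convexHull ℝ).measure_lt_top.ne
  calc μ (convexHull ℝ {q, b, c}) = ENNReal.ofReal |a * d| * μ (convexHull ℝ {q, b', c'}) :=
        addHaar_convexHull_triple_of_sub_eq_smul μ hE hli' hb hc
    _ < 1 * μ (convexHull ℝ {q, b', c'}) :=
        ENNReal.mul_lt_mul_left hpos.ne' hfin (ENNReal.ofReal_lt_one.2 had)
    _ = μ (convexHull ℝ {q, b', c'}) := one_mul _

end Plane

theorem midpoint_triangle_is_unique_minimum_area_general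
    (P : Set (EuclideanSpace ℝ (Fin 2)))
    (hPint : (interior P).Nonempty)
    (q : EuclideanSpace ℝ (Fin 2)) (hq : q ∉ P)
    (b c : EuclideanSpace ℝ (Fin 2))
    (hbc : Circumscribes q b c P) (hmid : midpoint ℝ b c ∈ P)
    (b' c' : EuclideanSpace ℝ (Fin 2))
    (hbc' : Circumscribes q b' c' P) (hmid' : midpoint ℝ b' c' ∉ P) :
    volume (convexHull ℝ ({q, b, c} : Set (EuclideanSpace ℝ (Fin 2)))) <
      volume (convexHull ℝ ({q, b', c'} : Set (EuclideanSpace ℝ (Fin 2)))) := by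
  have hE : Module.finrank ℝ (EuclideanSpace ℝ (Fin 2)) = 2 := finrank_euclideanSpace_fin
  obtain ⟨hsub, hqb, hqc, -⟩ := hbc
  obtain ⟨hsub', hqb', hqc', -⟩ := hbc'
  have hli :=
    linearIndependent_sub_of_interior_convexHull_nonempty hE (hPint.mono (interior_mono hsub))
  have hcone : PointedCone.hull ℝ {b - q, c - q} = PointedCone.hull ℝ {b' - q, c' - q} :=
    le_antisymm (hull_pair_sub_le_of_segment_inter_nonempty hq hsub' hqb hqc)
      (hull_pair_sub_le_of_segment_inter_nonempty hq hsub hqb' hqc')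
  rcases eq_smul_or_eq_smul_swap_of_hull_pair_eq hli hcone with ⟨a, d, hb, hc⟩ | ⟨a, d, hb, hc⟩
  · exact addHaar_convexHull_lt_of_sub_eq_smul volume hE hPint hsub' hb hc hmid hmid'
  · rw [pair_comm b' c'] at hsub' ⊢
    rw [midpoint_comm] at hmid'
    exact addHaar_convexHull_lt_of_sub_eq_smul volume hE hPint hsub' hb hc hmid hmid'

theorem midpoint_triangle_is_unique_minimum_area
    (P : Set (EuclideanSpace ℝ (Fin 2)))
    (hPc : IsCompact P) (hPconv : Convex ℝ P) (hPint : (interior P).Nonempty)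
    (q : EuclideanSpace ℝ (Fin 2)) (hq : q ∉ P)
    (b c : EuclideanSpace ℝ (Fin 2))
    (hbc : Circumscribes q b c P) (hmid : midpoint ℝ b c ∈ P)
    (b' c' : EuclideanSpace ℝ (Fin 2))
    (hbc' : Circumscribes q b' c' P) (hmid' : midpoint ℝ b' c' ∉ P) :
    volume (convexHull ℝ ({q, b, c} : Set (EuclideanSpace ℝ (Fin 2)))) <
      volume (convexHull ℝ ({q, b', c'} : Set (EuclideanSpace ℝ (Fin 2)))) :=
  midpoint_triangle_is_unique_minimum_area_general P hPint q hq b c hbc hmid b' c' hbc' hmid'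
end

section
/- Let ω be a fixed angle with 0 < ω < π. Let q = (s,t) with t > 0, and define the points b = (t·cot(ω) − √(s²·sin²(ω) + t²)·csc(ω), 0) and c = (−t·cot(ω) + √(s²·sin²(ω) + t²)·csc(ω), 0) on the x-axis. Then the origin (0,0) is the midpoint of the segment [b,c], and the angle at q between b and c equals ω, i.e., ∠(b, q, c) = ω. -/
open Real EuclideanGeometry

/-- The point of the Euclidean plane with coordinates `x` and `y`. -/
def pt (x y : ℝ) : EuclideanSpace ℝ (Fin 2) := WithLp.toLp 2 ![x, y]

/-!
With `u = -(t cot ω) + √(s² sin² ω + t²) / sin ω`, the points are `b = (-u, 0)` and `c = (u, 0)`, and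
`u` is the positive root of `u² + 2 t u cot ω = s² + t²`. That equation says `q` lies on the circle
through `b` and `c` centred at `(0, u cot ω)`, the arc on which `[b, c]` subtends the angle `ω`.
Concretely it gives `⟪b - q, c - q⟫ = 2 t u cot ω` and `‖b - q‖ ‖c - q‖ = 2 t u / sin ω`, so the
cosine of the angle is `cos ω`.
-/

lemma pt_sub_pt (a b c d : ℝ) : pt a b - pt c d = pt (a - c) (b - d) := by
  ext i; fin_cases i <;> simp [pt]

lemma inner_pt_pt (a b c d : ℝ) : inner ℝ (pt a b) (pt c d) = a * c + b * d := by
  simp [pt, PiLp.inner_apply, Fin.sum_univ_two, mul_comm]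

lemma norm_pt (a b : ℝ) : ‖pt a b‖ = √(a ^ 2 + b ^ 2) := by
  simp [pt, EuclideanSpace.norm_eq, Fin.sum_univ_two]

lemma midpoint_pt_neg_pt (u : ℝ) : midpoint ℝ (pt (-u) 0) (pt u 0) = pt 0 0 := by
  ext i; fin_cases i <;> simp [pt, midpoint_eq_smul_add]

lemma angle_pt_neg_pt_pt {ω s t u : ℝ} (hω₀ : 0 < ω) (hω₁ : ω < π) (ht : 0 < t) (hu : 0 < u)
    (h : u ^ 2 + 2 * t * u * cot ω = s ^ 2 + t ^ 2) :
    ∠ (pt (-u) 0) (pt s t) (pt u 0) = ω := by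
  have hS : 0 < sin ω := sin_pos_of_pos_of_lt_pi hω₀ hω₁
  have hC : cos ω = cot ω * sin ω := by rw [cot_eq_cos_div_sin, div_mul_cancel₀ _ hS.ne']
  have hinner : inner ℝ (pt (-u - s) (0 - t)) (pt (u - s) (0 - t)) = 2 * t * u * cot ω := by
    rw [inner_pt_pt]; linear_combination -h
  have hnorm : ‖pt (-u - s) (0 - t)‖ * ‖pt (u - s) (0 - t)‖ = 2 * t * u / sin ω := by
    rw [norm_pt, norm_pt, ← sqrt_mul (by positivity), ← sqrt_sq (by positivity : 0 ≤ 2 * t * u / sin ω)]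
    congr 1
    field_simp
    -- with `A = s² + t²` the product is `(A - u²)² - (2 t u cot ω)² + (2 t u)² (1 + cot² ω)`
    linear_combination (-(s ^ 2 + t ^ 2 - u ^ 2 + 2 * t * u * cot ω) * sin ω ^ 2) * h
      + 4 * u ^ 2 * t ^ 2 * (sin_sq_add_cos_sq ω) - 4 * u ^ 2 * t ^ 2 * (cos ω + cot ω * sin ω) * hC
  apply injOn_cos ⟨angle_nonneg _ _ _, angle_le_pi _ _ _⟩ ⟨hω₀.le, hω₁.le⟩
  rw [EuclideanGeometry.angle, InnerProductGeometry.cos_angle, vsub_eq_sub, vsub_eq_sub,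
    pt_sub_pt, pt_sub_pt, hinner, hnorm, hC]
  field_simp

section HalfBase

variable {ω : ℝ} (s t : ℝ)

lemma neg_mul_cot_add_sqrt_mul_inv_sin_pos (hω₀ : 0 < ω) (hω₁ : ω < π) (ht : 0 < t) :
    0 < -(t * cot ω) + √(s ^ 2 * sin ω ^ 2 + t ^ 2) * (sin ω)⁻¹ := by
  have hS : 0 < sin ω := sin_pos_of_pos_of_lt_pi hω₀ hω₁
  have hC : cos ω < 1 := by
    rw [← cos_zero]; exact cos_lt_cos_of_nonneg_of_le_pi le_rfl hω₁.le hω₀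
  have hR : t ≤ √(s ^ 2 * sin ω ^ 2 + t ^ 2) := le_sqrt_of_sq_le (by nlinarith [sq_nonneg (s * sin ω)])
  calc 0 < (√(s ^ 2 * sin ω ^ 2 + t ^ 2) - t * cos ω) * (sin ω)⁻¹ :=
        mul_pos (sub_pos.2 ((mul_lt_of_lt_one_right ht hC).trans_le hR)) (inv_pos.2 hS)
    _ = _ := by rw [cot_eq_cos_div_sin]; ring

lemma neg_mul_cot_add_sqrt_mul_inv_sin_sq (hS : sin ω ≠ 0) :
    let u := -(t * cot ω) + √(s ^ 2 * sin ω ^ 2 + t ^ 2) * (sin ω)⁻¹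
    u ^ 2 + 2 * t * u * cot ω = s ^ 2 + t ^ 2 := by
  have hR : √(s ^ 2 * sin ω ^ 2 + t ^ 2) ^ 2 = s ^ 2 * sin ω ^ 2 + t ^ 2 := sq_sqrt (by positivity)
  generalize √(s ^ 2 * sin ω ^ 2 + t ^ 2) = R at hR ⊢
  rw [cot_eq_cos_div_sin]
  field_simp
  linear_combination hR - t ^ 2 * sin_sq_add_cos_sq ω

end HalfBase

theorem wedge_apex_fixed_midpoint_origin
    (ω s t : ℝ) (hω₀ : 0 < ω) (hω₁ : ω < π) (ht : 0 < t) :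
    (let q := pt s t
     let b := pt (t * Real.cot ω - Real.sqrt (s ^ 2 * Real.sin ω ^ 2 + t ^ 2) * (Real.sin ω)⁻¹) 0
     let c := pt (-(t * Real.cot ω) + Real.sqrt (s ^ 2 * Real.sin ω ^ 2 + t ^ 2) * (Real.sin ω)⁻¹) 0
     midpoint ℝ b c = pt 0 0 ∧ EuclideanGeometry.angle b q c = ω) := by
  intro q b c
  set u := -(t * cot ω) + √(s ^ 2 * sin ω ^ 2 + t ^ 2) * (sin ω)⁻¹ with hu
  have hb : b = pt (-u) 0 := by rw [hu, neg_add, neg_neg, ← sub_eq_add_neg]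
  rw [hb]
  exact ⟨midpoint_pt_neg_pt u, angle_pt_neg_pt_pt hω₀ hω₁ ht
    (neg_mul_cot_add_sqrt_mul_inv_sin_pos s t hω₀ hω₁ ht)
    (neg_mul_cot_add_sqrt_mul_inv_sin_sq s t (sin_pos_of_pos_of_lt_pi hω₀ hω₁).ne')⟩
end

section
/- Let ω, α, β be angles with 0 < ω < π, 0 < α < π, 0 < β < π, and 0 < α + β < π, and let r > 0. Set γ = 2r·sin(ω)·sin(β)/sin(α+β) and δ = 2r·sin(ω)·sin(α)/sin(α+β). Then for every real θ, 2γ·sin(θ+α)·(δ·cos(θ−β) + 2r·cos(ω)·sin(θ) − γ·cot(ω)·sin(θ+α)) = −(8r²·sin(α)·sin(β)·sin(ω)/sin²(α+β))·sin(β−ω−θ)·sin(α+θ). -/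
open Real

theorem area_formula_arc_fixed_point
    (ω α β r : ℝ) (hω₀ : 0 < ω) (hω₁ : ω < π)
    (hα₀ : 0 < α) (hα₁ : α < π) (hβ₀ : 0 < β) (hβ₁ : β < π)
    (hαβ₀ : 0 < α + β) (hαβ₁ : α + β < π) (hr : 0 < r) :
    ∀ θ : ℝ,
      (let γ := 2 * r * Real.sin ω * Real.sin β / Real.sin (α + β)
       let δ := 2 * r * Real.sin ω * Real.sin α / Real.sin (α + β)
       2 * γ * Real.sin (θ + α) *
         (δ * Real.cos (θ - β) + 2 * r * Real.cos ω * Real.sin θ -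
           γ * Real.cot ω * Real.sin (θ + α))) =
      -(8 * r ^ 2 * Real.sin α * Real.sin β * Real.sin ω / Real.sin (α + β) ^ 2) *
        Real.sin (β - ω - θ) * Real.sin (α + θ) := by
  intro θ
  have hsω : Real.sin ω ≠ 0 := ne_of_gt (Real.sin_pos_of_pos_of_lt_pi hω₀ hω₁)
  have hsαβ : Real.sin (α + β) ≠ 0 := ne_of_gt (Real.sin_pos_of_pos_of_lt_pi hαβ₀ hαβ₁)
  simp only [Real.cot_eq_cos_div_sin]
  field_simp
  simp only [Real.sin_add, Real.cos_add, Real.sin_sub, Real.cos_sub]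
  ring_nf
end

section
/- Let ω be a fixed angle with 0 < ω < π/2, let r > 0 and s ≤ 0. For X > 0 with cos(ω)·X − sin(ω) > 0, define the points q = (2r(sin(ω)X² + cos(ω)X)/(X²+1), 2r(sin(ω)X + cos(ω))/(X²+1)), b = (s, s/X), and c = (s, (s − 2r·sin(ω))(sin(ω)X + cos(ω))/(cos(ω)X − sin(ω))) in ℝ². Then (1/2)·‖q − b‖·‖q − c‖·sin(ω) = (1/2)·sin(ω)·((2r·sin(ω) − s)X² + 2r·cos(ω)X − s)² / (X·(cos(ω)X − sin(ω))·(X²+1)). -/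
open Real

/-!
Both `b` and `c` lie on lines through the apex `q`: `b` on the line `qv`, of slope `1 / X = tan θ`,
and `c` on the line `qw`, of slope `m = (sin ω X + cos ω) / (cos ω X - sin ω) = tan (θ + ω)`.
On a line of slope `m` the distance is `|Δx| √(1 + m²)`, and `b`, `c` share the abscissa `s`, so
`‖q - b‖ ‖q - c‖ = (q₁ - s)² √(1 + X⁻²) √(1 + m²)`. Here `q₁ - s = N / (X² + 1)` with `N` the
numerator of the claimed formula, and the product of the two secants is
`(X² + 1) / (X (cos ω X - sin ω))`.
-/

theorem norm_pt_sub_pt_of_sub_eq_mul {x y u v m : ℝ} (h : y - v = m * (x - u)) :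
    ‖pt x y - pt u v‖ = |x - u| * √(1 + m ^ 2) := by
  have hsub : pt x y - pt u v = pt (x - u) (y - v) := by
    ext i; fin_cases i <;> simp [pt]
  rw [hsub, EuclideanSpace.norm_eq, Fin.sum_univ_two, ← sqrt_sq_eq_abs,
    ← sqrt_mul' _ (by positivity)]
  simp only [pt, Real.norm_eq_abs, sq_abs]
  congr 1
  simp [h]
  ring

theorem sqrt_one_add_inv_sq_mul_sqrt_one_add_sq {σ κ X : ℝ} (hσκ : σ ^ 2 + κ ^ 2 = 1)
    (hX : 0 < X) (hd : 0 < κ * X - σ) :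
    √(1 + X⁻¹ ^ 2) * √(1 + ((σ * X + κ) / (κ * X - σ)) ^ 2) =
      (X ^ 2 + 1) / (X * (κ * X - σ)) := by
  have hd₀ : X * κ - σ ≠ 0 := by rw [mul_comm]; exact hd.ne'
  rw [← sqrt_mul (by positivity), ← sqrt_sq (by positivity : 0 ≤ (X ^ 2 + 1) / (X * (κ * X - σ)))]
  congr 1
  field_simp
  linear_combination (X ^ 2 + 1) * hσκ

theorem norm_mul_norm_apex_sub_vertical_line {σ κ r s X : ℝ} (hσκ : σ ^ 2 + κ ^ 2 = 1)
    (hX : 0 < X) (hd : 0 < κ * X - σ) :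
    ‖pt (2 * r * (σ * X ^ 2 + κ * X) / (X ^ 2 + 1)) (2 * r * (σ * X + κ) / (X ^ 2 + 1)) -
        pt s (s / X)‖ *
      ‖pt (2 * r * (σ * X ^ 2 + κ * X) / (X ^ 2 + 1)) (2 * r * (σ * X + κ) / (X ^ 2 + 1)) -
        pt s ((s - 2 * r * σ) * (σ * X + κ) / (κ * X - σ))‖ =
      ((2 * r * σ - s) * X ^ 2 + 2 * r * κ * X - s) ^ 2 / (X * (κ * X - σ) * (X ^ 2 + 1)) := by
  have hd₀ : X * κ - σ ≠ 0 := by rw [mul_comm]; exact hd.ne'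
  have hqb : 2 * r * (σ * X + κ) / (X ^ 2 + 1) - s / X =
      X⁻¹ * (2 * r * (σ * X ^ 2 + κ * X) / (X ^ 2 + 1) - s) := by
    field_simp
  have hqc : 2 * r * (σ * X + κ) / (X ^ 2 + 1) - (s - 2 * r * σ) * (σ * X + κ) / (κ * X - σ) =
      (σ * X + κ) / (κ * X - σ) * (2 * r * (σ * X ^ 2 + κ * X) / (X ^ 2 + 1) - s) := by
    field_simp; ring
  have hdx : 2 * r * (σ * X ^ 2 + κ * X) / (X ^ 2 + 1) - s =
      ((2 * r * σ - s) * X ^ 2 + 2 * r * κ * X - s) / (X ^ 2 + 1) := by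
    field_simp; ring
  rw [norm_pt_sub_pt_of_sub_eq_mul hqb, norm_pt_sub_pt_of_sub_eq_mul hqc, hdx]
  calc _ = |((2 * r * σ - s) * X ^ 2 + 2 * r * κ * X - s) / (X ^ 2 + 1)| *
        |((2 * r * σ - s) * X ^ 2 + 2 * r * κ * X - s) / (X ^ 2 + 1)| *
        (√(1 + X⁻¹ ^ 2) * √(1 + ((σ * X + κ) / (κ * X - σ)) ^ 2)) := by ring
    _ = _ := by
      rw [abs_mul_abs_self, sqrt_one_add_inv_sq_mul_sqrt_one_add_sq hσκ hX hd]
      field_simp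

theorem area_formula_arc_vertical_line_general
    (ω r s X : ℝ)
    (hX : 0 < X) (hX' : Real.cos ω * X - Real.sin ω > 0) :
    (let q := pt (2 * r * (Real.sin ω * X ^ 2 + Real.cos ω * X) / (X ^ 2 + 1))
       (2 * r * (Real.sin ω * X + Real.cos ω) / (X ^ 2 + 1))
     let b := pt s (s / X)
     let c := pt s ((s - 2 * r * Real.sin ω) * (Real.sin ω * X + Real.cos ω) /
       (Real.cos ω * X - Real.sin ω))
     (1 / 2) * ‖q - b‖ * ‖q - c‖ * Real.sin ω =
       (1 / 2) * Real.sin ω *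
         ((2 * r * Real.sin ω - s) * X ^ 2 + 2 * r * Real.cos ω * X - s) ^ 2 /
         (X * (Real.cos ω * X - Real.sin ω) * (X ^ 2 + 1))) := by
  intro q b c
  rw [mul_assoc (1 / 2 : ℝ), norm_mul_norm_apex_sub_vertical_line (sin_sq_add_cos_sq ω) hX hX']
  ring

theorem area_formula_arc_vertical_line
    (ω r s X : ℝ) (hω₀ : 0 < ω) (hω₁ : ω < π / 2) (hr : 0 < r) (hs : s ≤ 0)
    (hX : 0 < X) (hX' : Real.cos ω * X - Real.sin ω > 0) :
    (let q := pt (2 * r * (Real.sin ω * X ^ 2 + Real.cos ω * X) / (X ^ 2 + 1))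
       (2 * r * (Real.sin ω * X + Real.cos ω) / (X ^ 2 + 1))
     let b := pt s (s / X)
     let c := pt s ((s - 2 * r * Real.sin ω) * (Real.sin ω * X + Real.cos ω) /
       (Real.cos ω * X - Real.sin ω))
     (1 / 2) * ‖q - b‖ * ‖q - c‖ * Real.sin ω =
       (1 / 2) * Real.sin ω *
         ((2 * r * Real.sin ω - s) * X ^ 2 + 2 * r * Real.cos ω * X - s) ^ 2 /
         (X * (Real.cos ω * X - Real.sin ω) * (X ^ 2 + 1))) :=
  area_formula_arc_vertical_line_general ω r s X hX hX'
end

section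
/- Let ω be a fixed angle with 0 < ω < π/2, let r > 0 and s ≤ 0, and define σ(X) = (1/2)·sin(ω)·((2r·sin(ω) − s)X² + 2r·cos(ω)X − s)² / (X·(cos(ω)X − sin(ω))·(X²+1)) for X > 0 with cos(ω)·X − sin(ω) > 0. Then for every such X, the derivative σ'(X) = 0 if and only if (2r·sin(ω) − s)X² + 2r·cos(ω)X − s = 0 or (−s·sin(ω) + 2r·sin²(ω) + 4r·cos²(ω))X⁴ − 2cos(ω)(s + 3r·sin(ω))X³ + 6r·sin²(ω)X² + 2cos(ω)(r·sin(ω) − s)X + s·sin(ω) = 0. -/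
/-!
Writing `σ = c · N² / D` with `c = sin ω / 2`, `N` the quadratic numerator and `D` the quartic
denominator, the quotient rule gives `σ' = c · N · (2 N' D - N D') / D²`. Since `c ≠ 0` and
`D ≠ 0` on the admissible range, `σ'` vanishes exactly where `N = 0` or `2 N' D - N D' = 0`,
and the latter expands to minus the stated quartic.
-/

open Real

section SquareQuotient

variable {f g : ℝ → ℝ} {f' g' x : ℝ}

theorem HasDerivAt.const_mul_sq_div (hf : HasDerivAt f f' x) (hg : HasDerivAt g g' x)
    (hgx : g x ≠ 0) (c : ℝ) :
    HasDerivAt (fun y => c * f y ^ 2 / g y) (c * f x * (2 * f' * g x - f x * g') / g x ^ 2) x := by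
  refine (((hf.pow 2).const_mul c).div hg hgx).congr_deriv ?_
  simp only [Pi.pow_apply]
  ring

theorem deriv_const_mul_sq_div_eq_zero_iff (hf : HasDerivAt f f' x)
    (hg : HasDerivAt g g' x) (hgx : g x ≠ 0) {c : ℝ} (hc : c ≠ 0) :
    deriv (fun y => c * f y ^ 2 / g y) x = 0 ↔ f x = 0 ∨ 2 * f' * g x - f x * g' = 0 := by
  rw [(hf.const_mul_sq_div hg hgx c).deriv, div_eq_zero_iff, mul_assoc]
  simp [hc, hgx]

end SquareQuotient

noncomputable section ArcVerticalLine

variable (ω r s : ℝ)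

def arcAreaNumerator (X : ℝ) : ℝ :=
  (2 * r * sin ω - s) * X ^ 2 + 2 * r * cos ω * X - s

def arcAreaDenominator (X : ℝ) : ℝ :=
  X * (cos ω * X - sin ω) * (X ^ 2 + 1)

def arcCriticalQuartic (X : ℝ) : ℝ :=
  (-(s * sin ω) + 2 * r * sin ω ^ 2 + 4 * r * cos ω ^ 2) * X ^ 4 -
    2 * cos ω * (s + 3 * r * sin ω) * X ^ 3 + 6 * r * sin ω ^ 2 * X ^ 2 +
    2 * cos ω * (r * sin ω - s) * X + s * sin ω

theorem hasDerivAt_arcAreaNumerator (X : ℝ) :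
    HasDerivAt (arcAreaNumerator ω r s) (2 * (2 * r * sin ω - s) * X + 2 * r * cos ω) X := by
  refine ((((hasDerivAt_pow 2 X).const_mul (2 * r * sin ω - s)).add
    ((hasDerivAt_id X).const_mul (2 * r * cos ω))).sub_const s).congr_deriv ?_
  simp only [Nat.cast_ofNat]
  ring

theorem hasDerivAt_arcAreaDenominator (X : ℝ) :
    HasDerivAt (arcAreaDenominator ω) (cos ω * (4 * X ^ 3 + 2 * X) - sin ω * (3 * X ^ 2 + 1)) X := by
  refine (((hasDerivAt_id X).mul (((hasDerivAt_id X).const_mul (cos ω)).sub_const (sin ω))).mul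
    ((hasDerivAt_pow 2 X).add_const 1)).congr_deriv ?_
  simp only [Pi.mul_apply, id_eq, Nat.cast_ofNat]
  ring

theorem arcArea_critical_factor_eq_neg_quartic (X : ℝ) :
    2 * (2 * (2 * r * sin ω - s) * X + 2 * r * cos ω) * arcAreaDenominator ω X -
        arcAreaNumerator ω r s X * (cos ω * (4 * X ^ 3 + 2 * X) - sin ω * (3 * X ^ 2 + 1)) =
      -arcCriticalQuartic ω r s X := by
  simp only [arcAreaDenominator, arcAreaNumerator, arcCriticalQuartic]
  ring

end ArcVerticalLine

theorem critical_points_arc_vertical_line_general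
    (ω r s : ℝ) (hω₀ : 0 < ω) (hω₁ : ω < π / 2)
    (σ : ℝ → ℝ)
    (hσ : σ = fun X => (1 / 2) * Real.sin ω *
      ((2 * r * Real.sin ω - s) * X ^ 2 + 2 * r * Real.cos ω * X - s) ^ 2 /
      (X * (Real.cos ω * X - Real.sin ω) * (X ^ 2 + 1))) :
    ∀ X : ℝ, 0 < X → Real.cos ω * X - Real.sin ω > 0 →
      (deriv σ X = 0 ↔
        (2 * r * Real.sin ω - s) * X ^ 2 + 2 * r * Real.cos ω * X - s = 0 ∨
        (-(s * Real.sin ω) + 2 * r * Real.sin ω ^ 2 + 4 * r * Real.cos ω ^ 2) * X ^ 4 -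
            2 * Real.cos ω * (s + 3 * r * Real.sin ω) * X ^ 3 +
            6 * r * Real.sin ω ^ 2 * X ^ 2 +
            2 * Real.cos ω * (r * Real.sin ω - s) * X + s * Real.sin ω = 0) := by
  intro X hX hline
  subst hσ
  have hsin : 0 < sin ω := sin_pos_of_pos_of_lt_pi hω₀ (hω₁.trans (half_lt_self pi_pos))
  have hD : arcAreaDenominator ω X ≠ 0 := by unfold arcAreaDenominator; positivity
  have key := deriv_const_mul_sq_div_eq_zero_iff (hasDerivAt_arcAreaNumerator ω r s X)
    (hasDerivAt_arcAreaDenominator ω X) hD (c := 1 / 2 * sin ω) (by positivity)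
  rw [arcArea_critical_factor_eq_neg_quartic, neg_eq_zero] at key
  exact key

theorem critical_points_arc_vertical_line
    (ω r s : ℝ) (hω₀ : 0 < ω) (hω₁ : ω < π / 2) (hr : 0 < r) (hs : s ≤ 0)
    (σ : ℝ → ℝ)
    (hσ : σ = fun X => (1 / 2) * Real.sin ω *
      ((2 * r * Real.sin ω - s) * X ^ 2 + 2 * r * Real.cos ω * X - s) ^ 2 /
      (X * (Real.cos ω * X - Real.sin ω) * (X ^ 2 + 1))) :
    ∀ X : ℝ, 0 < X → Real.cos ω * X - Real.sin ω > 0 →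
      (deriv σ X = 0 ↔
        (2 * r * Real.sin ω - s) * X ^ 2 + 2 * r * Real.cos ω * X - s = 0 ∨
        (-(s * Real.sin ω) + 2 * r * Real.sin ω ^ 2 + 4 * r * Real.cos ω ^ 2) * X ^ 4 -
            2 * Real.cos ω * (s + 3 * r * Real.sin ω) * X ^ 3 +
            6 * r * Real.sin ω ^ 2 * X ^ 2 +
            2 * Real.cos ω * (r * Real.sin ω - s) * X + s * Real.sin ω = 0) :=
  critical_points_arc_vertical_line_general ω r s hω₀ hω₁ σ hσ
end

section
/- The polynomial p₄(X) = 13X⁴ − 92X³ + 45X² + 12X − 62 is irreducible over ℚ (i.e., irreducible as an element of the polynomial ring ℚ[X]). -/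
open Polynomial

lemma quartic_key {F : Type*} [Field F] (a3 a2 a1 a0 : F)
    (hroot : ∀ x : F, x ^ 4 + a3 * x ^ 3 + a2 * x ^ 2 + a1 * x + a0 ≠ 0)
    (hquad : ∀ b c d e : F, ¬(b + d = a3 ∧ c + e + b * d = a2 ∧ b * e + c * d = a1 ∧ c * e = a0)) :
    Irreducible (X ^ 4 + C a3 * X ^ 3 + C a2 * X ^ 2 + C a1 * X + C a0 : F[X]) := by
  set q : F[X] := X ^ 4 + C a3 * X ^ 3 + C a2 * X ^ 2 + C a1 * X + C a0 with hqdef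
  have hc4 : q.coeff 4 = 1 := by simp [hqdef, coeff_X_pow, coeff_C]
  have hc3 : q.coeff 3 = a3 := by simp [hqdef, coeff_X_pow, coeff_C]
  have hc2 : q.coeff 2 = a2 := by simp [hqdef, coeff_X_pow, coeff_C]
  have hc1 : q.coeff 1 = a1 := by simp [hqdef, coeff_X_pow, coeff_C]
  have hc0 : q.coeff 0 = a0 := by simp [hqdef, coeff_X_pow, coeff_C]
  have hq0 : q ≠ 0 := by
    intro h0
    rw [h0] at hc4; simp at hc4
  have hq4 : q.natDegree = 4 := by
    rw [hqdef]; compute_degree!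
  have hlin : ∀ u v : F[X], q = u * v → u.natDegree = 1 → False := by
    intro u v huv hu1
    have hune : u ≠ 0 := by intro h; rw [h] at hu1; simp at hu1
    have hlc : u.coeff 1 ≠ 0 := by
      have := Polynomial.leadingCoeff_ne_zero.mpr hune
      rwa [Polynomial.leadingCoeff, hu1] at this
    set x := -u.coeff 0 / u.coeff 1 with hx
    have hux : u.eval x = 0 := by
      rw [Polynomial.eval_eq_sum_range, hu1]
      simp [Finset.sum_range_succ, hx]
      field_simp
      ring
    apply hroot x
    have hev : q.eval x = 0 := by rw [huv]; simp [hux]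
    simpa [hqdef] using hev
  constructor
  · intro hu
    have := Polynomial.natDegree_eq_zero_of_isUnit hu
    omega
  · intro g h hq
    by_contra hc
    push_neg at hc
    obtain ⟨hg, hh⟩ := hc
    have hgne : g ≠ 0 := by rintro rfl; simp at hq; exact hq0 hq
    have hhne : h ≠ 0 := by rintro rfl; simp at hq; exact hq0 hq
    have hdg : 1 ≤ g.natDegree := by
      by_contra hlt
      push_neg at hlt
      have h0 : g.natDegree = 0 := by omega
      have hgc := Polynomial.eq_C_of_natDegree_eq_zero h0
      apply hg
      rw [hgc]
      refine Polynomial.isUnit_C.mpr (isUnit_iff_ne_zero.mpr fun hz => hgne ?_)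
      rw [hgc, hz, map_zero]
    have hdh : 1 ≤ h.natDegree := by
      by_contra hlt
      push_neg at hlt
      have h0 : h.natDegree = 0 := by omega
      have hhc := Polynomial.eq_C_of_natDegree_eq_zero h0
      apply hh
      rw [hhc]
      refine Polynomial.isUnit_C.mpr (isUnit_iff_ne_zero.mpr fun hz => hhne ?_)
      rw [hhc, hz, map_zero]
    have hsum : g.natDegree + h.natDegree = 4 := by
      rw [← Polynomial.natDegree_mul hgne hhne, ← hq, hq4]
    have hcase : g.natDegree = 1 ∨ g.natDegree = 2 ∨ h.natDegree = 1 := by omega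
    rcases hcase with h1 | h2 | h3
    · exact hlin g h hq h1
    · -- quadratic * quadratic case
      have hh2 : h.natDegree = 2 := by omega
      have hgz : ∀ k, 3 ≤ k → g.coeff k = 0 := fun k hk =>
        Polynomial.coeff_eq_zero_of_natDegree_lt (by omega)
      have hhz : ∀ k, 3 ≤ k → h.coeff k = 0 := fun k hk =>
        Polynomial.coeff_eq_zero_of_natDegree_lt (by omega)
      have hcoeff : ∀ n, q.coeff n = ∑ k ∈ Finset.range (n + 1), g.coeff k * h.coeff (n - k) := by
        intro n
        rw [hq, Polynomial.coeff_mul, Finset.Nat.sum_antidiagonal_eq_sum_range_succ_mk]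
      have eq4 : g.coeff 2 * h.coeff 2 = 1 := by
        have := hcoeff 4
        rw [hc4] at this
        simp [Finset.sum_range_succ, hgz 3 (by omega), hgz 4 (by omega),
          hhz 3 (by omega), hhz 4 (by omega)] at this
        linear_combination -this
      have eq3 : g.coeff 1 * h.coeff 2 + g.coeff 2 * h.coeff 1 = a3 := by
        have := hcoeff 3
        rw [hc3] at this
        simp [Finset.sum_range_succ, hgz 3 (by omega), hhz 3 (by omega)] at this
        linear_combination -this
      have eq2 : g.coeff 0 * h.coeff 2 + g.coeff 1 * h.coeff 1 + g.coeff 2 * h.coeff 0 = a2 := by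
        have := hcoeff 2
        rw [hc2] at this
        simp [Finset.sum_range_succ] at this
        linear_combination -this
      have eq1 : g.coeff 0 * h.coeff 1 + g.coeff 1 * h.coeff 0 = a1 := by
        have := hcoeff 1
        rw [hc1] at this
        simp [Finset.sum_range_succ] at this
        linear_combination -this
      have eq0 : g.coeff 0 * h.coeff 0 = a0 := by
        have := hcoeff 0
        rw [hc0] at this
        simpa [Finset.sum_range_succ] using this.symm
      exact hquad (g.coeff 1 * h.coeff 2) (g.coeff 0 * h.coeff 2)
        (g.coeff 2 * h.coeff 1) (g.coeff 2 * h.coeff 0)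
        ⟨by linear_combination eq3,
         by linear_combination eq2 + g.coeff 1 * h.coeff 1 * eq4,
         by linear_combination eq1 + (g.coeff 0 * h.coeff 1 + g.coeff 1 * h.coeff 0) * eq4,
         by linear_combination eq0 + g.coeff 0 * h.coeff 0 * eq4⟩
    · exact hlin h g (by rw [hq, mul_comm]) h3

instance : Fact (Nat.Prime 5) := ⟨by norm_num⟩

noncomputable def qZ : Polynomial ℤ :=
  X ^ 4 + C (-92) * X ^ 3 + C 585 * X ^ 2 + C 2028 * X + C (-136214)

lemma qZ_monic : qZ.Monic := by
  unfold qZ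
  monicity!

set_option maxHeartbeats 1000000 in
lemma qZ_mod5_irred :
    Irreducible (qZ.map (Int.castRingHom (ZMod 5))) := by
  have : qZ.map (Int.castRingHom (ZMod 5)) =
      X ^ 4 + C ((-92 : ℤ) : ZMod 5) * X ^ 3 + C ((585 : ℤ) : ZMod 5) * X ^ 2 +
        C ((2028 : ℤ) : ZMod 5) * X + C ((-136214 : ℤ) : ZMod 5) := by
    simp only [qZ, Polynomial.map_add, Polynomial.map_mul, Polynomial.map_pow,
      Polynomial.map_C, Polynomial.map_X, eq_intCast, Int.cast_neg, Int.cast_ofNat]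
    norm_num [map_ofNat]
  rw [this]
  exact quartic_key _ _ _ _ (by decide) (by decide)

lemma qZ_irred : Irreducible qZ :=
  qZ_monic.irreducible_of_irreducible_map (Int.castRingHom (ZMod 5)) qZ qZ_mod5_irred

lemma qQ_irred :
    Irreducible (X ^ 4 + C (-92 : ℚ) * X ^ 3 + C (585 : ℚ) * X ^ 2 + C (2028 : ℚ) * X +
      C (-136214 : ℚ) : Polynomial ℚ) := by
  have h := (qZ_monic.irreducible_iff_irreducible_map_fraction_map (K := ℚ)).mp qZ_irred
  have heq : qZ.map (algebraMap ℤ ℚ) =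
      X ^ 4 + C (-92 : ℚ) * X ^ 3 + C (585 : ℚ) * X ^ 2 + C (2028 : ℚ) * X + C (-136214 : ℚ) := by
    simp only [qZ, Polynomial.map_add, Polynomial.map_mul, Polynomial.map_pow,
      Polynomial.map_C, Polynomial.map_X]
    norm_num
  rwa [heq] at h

noncomputable def scaleEquiv : Polynomial ℚ ≃ₐ[ℚ] Polynomial ℚ :=
  AlgEquiv.ofAlgHom (aeval (C 13 * X)) (aeval (C (13⁻¹ : ℚ) * X))
    (by
      apply Polynomial.algHom_ext
      simp only [AlgHom.coe_comp, Function.comp_apply, aeval_X, map_mul, aeval_C,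
        AlgHom.coe_id, id_eq]
      rw [algebraMap_eq, ← mul_assoc, ← C_mul]
      norm_num)
    (by
      apply Polynomial.algHom_ext
      simp only [AlgHom.coe_comp, Function.comp_apply, aeval_X, map_mul, aeval_C,
        AlgHom.coe_id, id_eq]
      rw [algebraMap_eq, ← mul_assoc, ← C_mul]
      norm_num)

lemma scaleEquiv_apply (p : Polynomial ℚ) : scaleEquiv p = aeval (C 13 * X) p := rfl

theorem quartic_irreducible :
    Irreducible (13 * X ^ 4 - 92 * X ^ 3 + 45 * X ^ 2 + 12 * X - 62 : Polynomial ℚ) := by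
  have h1 : Irreducible (scaleEquiv (X ^ 4 + C (-92 : ℚ) * X ^ 3 + C (585 : ℚ) * X ^ 2 +
      C (2028 : ℚ) * X + C (-136214 : ℚ))) :=
    (MulEquiv.irreducible_iff scaleEquiv.toMulEquiv).mpr qQ_irred
  have h2 : scaleEquiv (X ^ 4 + C (-92 : ℚ) * X ^ 3 + C (585 : ℚ) * X ^ 2 +
      C (2028 : ℚ) * X + C (-136214 : ℚ)) =
      C (2197 : ℚ) * (13 * X ^ 4 - 92 * X ^ 3 + 45 * X ^ 2 + 12 * X - 62) := by
    rw [scaleEquiv_apply]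
    simp only [map_add, map_mul, map_pow, aeval_C, aeval_X, map_neg, map_ofNat,
      algebraMap_eq, Polynomial.C_eq_natCast]
    ring
  rw [h2] at h1
  have hu : IsUnit (C (2197 : ℚ)) := Polynomial.isUnit_C.mpr (by norm_num)
  exact (Associated.irreducible_iff (associated_unit_mul_left _ _ hu)).mp h1
end

section
/- The polynomial p₄(X) = 13X⁴ − 92X³ + 45X² + 12X − 62, regarded as a polynomial with real coefficients, has exactly two real roots. -/
theorem quartic_has_exactly_two_real_roots :
    {x : ℝ | 13 * x ^ 4 - 92 * x ^ 3 + 45 * x ^ 2 + 12 * x - 62 = 0}.ncard = 2 := by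
  set f : ℝ → ℝ := fun x => 13 * x ^ 4 - 92 * x ^ 3 + 45 * x ^ 2 + 12 * x - 62 with hf
  have hcont : Continuous f := by fun_prop
  -- root a in [-1, -11/100]
  have ha : ∃ a ∈ Set.Icc (-1 : ℝ) (-11/100), f a = 0 := by
    have h := intermediate_value_Icc' (by norm_num : (-1:ℝ) ≤ -11/100)
      hcont.continuousOn
    have : (0:ℝ) ∈ Set.Icc (f (-11/100)) (f (-1)) := by
      constructor <;> simp only [hf] <;> norm_num
    obtain ⟨a, ha1, ha2⟩ := h this
    exact ⟨a, ha1, ha2⟩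
  -- root b in [27/5, 7]
  have hb : ∃ b ∈ Set.Icc (27/5 : ℝ) 7, f b = 0 := by
    have h := intermediate_value_Icc (by norm_num : (27/5:ℝ) ≤ 7) hcont.continuousOn
    have : (0:ℝ) ∈ Set.Icc (f (27/5)) (f 7) := by
      constructor <;> simp only [hf] <;> norm_num
    obtain ⟨b, hb1, hb2⟩ := h this
    exact ⟨b, hb1, hb2⟩
  obtain ⟨a, ⟨ha1, ha2⟩, haz⟩ := ha
  obtain ⟨b, ⟨hb1, hb2⟩, hbz⟩ := hb
  have hmid : ∀ x : ℝ, -11/100 ≤ x → x ≤ 27/5 → f x < 0 := by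
    intro x h1 h2
    simp only [hf]
    nlinarith [mul_nonneg (sub_nonneg.2 h1) (sub_nonneg.2 h2), sq_nonneg x,
      sq_nonneg (x-1), sq_nonneg (x+11/100), sq_nonneg (27/5-x),
      mul_nonneg (mul_nonneg (sub_nonneg.2 h1) (sub_nonneg.2 h2)) (sub_nonneg.2 h2),
      mul_nonneg (mul_nonneg (sub_nonneg.2 h1) (sub_nonneg.2 h1)) (sub_nonneg.2 h2)]
  have hset : {x : ℝ | 13 * x ^ 4 - 92 * x ^ 3 + 45 * x ^ 2 + 12 * x - 62 = 0} = {a, b} := by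
    ext x
    simp only [Set.mem_setOf_eq, Set.mem_insert_iff, Set.mem_singleton_iff]
    constructor
    · intro hx
      have hfx : f x = 0 := hx
      rcases le_or_gt x (-11/100) with hle | hgt
      · left
        have key : (x - a) * (13*(x^3+x^2*a+x*a^2+a^3) - 92*(x^2+x*a+a^2)
            + 45*(x+a) + 12) = 0 := by
          have := haz; simp only [hf] at this hfx; ring_nf; ring_nf at this hfx; nlinarith [this, hfx]
        have hq : 13*(x^3+x^2*a+x*a^2+a^3) - 92*(x^2+x*a+a^2) + 45*(x+a) + 12 < 0 := by
          nlinarith [sq_nonneg (x-a), sq_nonneg (x+a),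
            mul_nonneg (neg_nonneg.2 (hle.trans (by norm_num)))
              (neg_nonneg.2 (ha2.trans (by norm_num))), sq_nonneg x, sq_nonneg a]
        have := mul_eq_zero.1 key
        rcases this with h | h
        · linarith [sub_eq_zero.1 h]
        · exact absurd h hq.ne
      · rcases le_or_gt x (27/5) with hle2 | hgt2
        · exact absurd hfx (hmid x hgt.le hle2).ne
        · right
          have key : (x - b) * (13*(x^3+x^2*b+x*b^2+b^3) - 92*(x^2+x*b+b^2)
              + 45*(x+b) + 12) = 0 := by
            have := hbz; simp only [hf] at this hfx; nlinarith [this, hfx]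
          have hq : 13*(x^3+x^2*b+x*b^2+b^3) - 92*(x^2+x*b+b^2) + 45*(x+b) + 12 > 0 := by
            have hx5 : 27/5 ≤ x := hgt2.le
            nlinarith [sq_nonneg (x-b), mul_nonneg (sub_nonneg.2 hx5) (sub_nonneg.2 hb1),
              mul_nonneg (mul_nonneg (sub_nonneg.2 hx5) (sub_nonneg.2 hb1)) (sub_nonneg.2 hx5),
              mul_nonneg (mul_nonneg (sub_nonneg.2 hx5) (sub_nonneg.2 hb1)) (sub_nonneg.2 hb1),
              sq_nonneg (x+b-54/5)]
          have := mul_eq_zero.1 key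
          rcases this with h | h
          · linarith [sub_eq_zero.1 h]
          · exact absurd h hq.ne'
    · rintro (rfl | rfl)
      · exact haz
      · exact hbz
  rw [hset]
  rw [Set.ncard_pair (by linarith : a ≠ b)]
end
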